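/- For an integer a ≥ 1, set p = 2a and define h(s) = (√s − 2)^{p−1} s^{−1/2} for s > 0. Then the a-th derivative h^{(a)} is (absolutely) integrable on (4,∞), and ∫₄^∞ h^{(a)}(s) ds = (a − 1)! (= Γ(a)). Equivalently, h^{(a−1)}(s) → (a − 1)! as s → ∞. -/

import Mathlib

/-!
Expanding `(√s - c) ^ n / √s` binomially writes `h` on `(0, ∞)` as a combination of the powers
`s ^ ((k - 1) / 2)`, `0 ≤ k ≤ n`, so every derivative is explicit, with descending Pochhammer
coefficients. For `n = 2j + 1` the top power is `s ^ j`: its `j`-th derivative is the constant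
`j!` while all other terms of `h^(j)` decay, and in `h^(j+1)` it disappears while all other
terms are `O(s ^ (-3/2))`. At `s = c²` the powers of `c` combine into a common factor and
`h^(m)(c²)` becomes an `n`-th finite difference of a polynomial of degree `m`, which vanishes
for `m < n`. The fundamental theorem of calculus on `(c², ∞)` then gives `j!`.
-/

open MeasureTheory Set Filter

section

open Finset Polynomial

theorem sum_range_neg_one_pow_mul_choose_mul_eval_eq_zero {R : Type*} [CommRing R]
    {P : R[X]} {n : ℕ} (hP : P.natDegree < n) :
    ∑ k ∈ range (n + 1), (-1 : R) ^ (n - k) * n.choose k * P.eval (k : R) = 0 := by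
  simpa [fwdDiff_iter_eq_sum_shift, zsmul_eq_mul] using
    congr_fun (fwdDiff_iter_eq_zero_of_degree_lt hP) 0

theorem ContDiffOn.hasDerivAt_iteratedDerivWithin {𝕜 F : Type*} [NontriviallyNormedField 𝕜]
    [NormedAddCommGroup F] [NormedSpace 𝕜 F] {f : 𝕜 → F} {s : Set 𝕜} {n : WithTop ℕ∞} {m : ℕ}
    (hf : ContDiffOn 𝕜 n f s) (hm : (m : WithTop ℕ∞) < n) (hs : IsOpen s) {x : 𝕜} (hx : x ∈ s) :
    HasDerivAt (iteratedDerivWithin m f s) (iteratedDerivWithin (m + 1) f s x) x := by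
  rw [iteratedDerivWithin_succ, derivWithin_of_isOpen hs hx]
  exact ((hf.differentiableOn_iteratedDerivWithin hm hs.uniqueDiffOn x hx).differentiableAt
    (hs.mem_nhds hx)).hasDerivAt

theorem iteratedDerivWithin_rpow_const_Ioi (m : ℕ) (r : ℝ) {x : ℝ} (hx : 0 < x) :
    iteratedDerivWithin m (fun x : ℝ => x ^ r) (Ioi 0) x
      = (descPochhammer ℝ m).eval r * x ^ (r - m) := by
  rw [iteratedDerivWithin_of_isOpen_eq_iterate isOpen_Ioi hx, Real.iter_deriv_rpow_const]

theorem iteratedDerivWithin_sum_mul_rpow_Ioi {ι : Type*} (I : Finset ι) (b r : ι → ℝ) (m : ℕ)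
    {x : ℝ} (hx : 0 < x) :
    iteratedDerivWithin m (fun x : ℝ => ∑ i ∈ I, b i * x ^ r i) (Ioi 0) x
      = ∑ i ∈ I, b i * (descPochhammer ℝ m).eval (r i) * x ^ (r i - m) := by
  rw [iteratedDerivWithin_fun_sum (Set.mem_Ioi.mpr hx) (uniqueDiffOn_Ioi 0) fun i _ =>
    (contDiffAt_const.mul (Real.contDiffAt_rpow_const_of_ne hx.ne')).contDiffWithinAt]
  refine sum_congr rfl fun i _ => ?_
  rw [iteratedDerivWithin_const_mul_field, iteratedDerivWithin_rpow_const_Ioi m _ hx, mul_assoc]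

end

namespace CowlingHaagerup

open Finset Polynomial

/-- The paper's `h` is `h (p - 1) 2`. -/
noncomputable def h (n : ℕ) (c s : ℝ) : ℝ := (Real.sqrt s - c) ^ n * s ^ (-(1 : ℝ) / 2)

theorem h_eqOn_sum (n : ℕ) (c : ℝ) :
    EqOn (h n c)
      (fun s => ∑ k ∈ range (n + 1), n.choose k * (-c) ^ (n - k) * s ^ (((k : ℝ) - 1) / 2))
      (Ioi 0) := by
  intro s (hs : 0 < s)
  simp only [h, sub_eq_add_neg, add_pow, sum_mul]
  refine sum_congr rfl fun k _ => ?_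
  have hsqrt : Real.sqrt s ^ k * s ^ (-(1 : ℝ) / 2) = s ^ (((k : ℝ) + -1) / 2) := by
    rw [Real.sqrt_eq_rpow, ← Real.rpow_natCast, ← Real.rpow_mul hs.le, ← Real.rpow_add hs]
    ring_nf
  rw [← hsqrt]
  ring

theorem contDiffOn_h (n : ℕ) (c : ℝ) : ContDiffOn ℝ ⊤ (h n c) (Ioi 0) := fun x (hx : 0 < x) =>
  ((((Real.contDiffAt_sqrt hx.ne').sub contDiffAt_const).pow n).mul
    (Real.contDiffAt_rpow_const_of_ne hx.ne')).contDiffWithinAt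

theorem iteratedDerivWithin_h (n m : ℕ) (c : ℝ) {x : ℝ} (hx : 0 < x) :
    iteratedDerivWithin m (h n c) (Ioi 0) x
      = ∑ k ∈ range (n + 1), n.choose k * (-c) ^ (n - k)
          * (descPochhammer ℝ m).eval (((k : ℝ) - 1) / 2) * x ^ (((k : ℝ) - 1) / 2 - m) :=
  (iteratedDerivWithin_congr (h_eqOn_sum n c) hx).trans
    (iteratedDerivWithin_sum_mul_rpow_Ioi _ _ _ m hx)

theorem iteratedDerivWithin_h_sq_eq_zero {n m : ℕ} (hm : m < n) {c : ℝ} (hc : 0 < c) :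
    iteratedDerivWithin m (h n c) (Ioi 0) (c ^ 2) = 0 := by
  set Q : ℝ[X] := (descPochhammer ℝ m).comp (C (1 / 2) * (X - 1))
  have hQ : Q.natDegree < n := by
    refine natDegree_comp_le.trans_lt ?_
    have : (C (1 / 2 : ℝ) * (X - 1)).natDegree ≤ 1 := by compute_degree
    rw [descPochhammer_natDegree]
    nlinarith
  have hterm : ∀ k ∈ range (n + 1), n.choose k * (-c) ^ (n - k)
      * (descPochhammer ℝ m).eval (((k : ℝ) - 1) / 2) * (c ^ 2) ^ (((k : ℝ) - 1) / 2 - m)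
      = c ^ ((n : ℝ) - 1 - 2 * m) * ((-1) ^ (n - k) * n.choose k * Q.eval (k : ℝ)) := by
    intro k hk
    have hpow : c ^ (n - k) * (c ^ 2) ^ (((k : ℝ) - 1) / 2 - m) = c ^ ((n : ℝ) - 1 - 2 * m) := by
      rw [← Real.rpow_natCast, ← Real.rpow_natCast c 2, ← Real.rpow_mul hc.le,
        ← Real.rpow_add hc, Nat.cast_sub (mem_range_succ_iff.mp hk)]
      ring_nf
    have hQk : Q.eval (k : ℝ) = (descPochhammer ℝ m).eval (((k : ℝ) - 1) / 2) := by
      simp only [Q, eval_comp, eval_mul, eval_C, eval_sub, eval_X, eval_one]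
      ring_nf
    rw [hQk, neg_pow, ← hpow]
    ring
  rw [iteratedDerivWithin_h n m c (by positivity), sum_congr rfl hterm, ← mul_sum,
    sum_range_neg_one_pow_mul_choose_mul_eval_eq_zero hQ, mul_zero]

theorem integrableOn_iteratedDerivWithin_h {j m : ℕ} (hm : j < m) (c : ℝ) {b : ℝ} (hb : 0 < b) :
    IntegrableOn (iteratedDerivWithin m (h (2 * j + 1) c) (Ioi 0)) (Ioi b) := by
  refine (integrableOn_congr_fun (fun x (hx : b < x) => iteratedDerivWithin_h _ m c (hb.trans hx))
    measurableSet_Ioi).mpr (integrable_finsetSum _ fun k hk => ?_)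
  rcases (mem_range_succ_iff.mp hk).lt_or_eq with hk | rfl
  · have hexp : ((k : ℝ) - 1) / 2 - m < -1 := by
      have : (k : ℝ) + 1 ≤ 2 * j + 1 := by exact_mod_cast hk
      have : (j : ℝ) + 1 ≤ m := by exact_mod_cast hm
      linarith
    exact (integrableOn_Ioi_rpow_of_lt hexp hb).const_mul _
  · have : (descPochhammer ℝ m).eval (j : ℝ) = 0 := by
      rw [descPochhammer_eval_eq_descFactorial, Nat.descFactorial_eq_zero_iff_lt.mpr hm,
        Nat.cast_zero]
    simp [this]

theorem tendsto_iteratedDerivWithin_h (j : ℕ) (c : ℝ) :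
    Tendsto (iteratedDerivWithin j (h (2 * j + 1) c) (Ioi 0)) atTop (nhds (j.factorial : ℝ)) := by
  refine Tendsto.congr' (eventually_gt_atTop 0 |>.mono fun x hx =>
    (iteratedDerivWithin_h _ j c hx).symm) ?_
  simp only [sum_range_succ _ (2 * j + 1)]
  rw [← zero_add (j.factorial : ℝ)]
  apply Tendsto.add
  · convert tendsto_finsetSum (a := fun _ => (0 : ℝ)) _ fun k hk => ?_
    · rw [sum_const_zero]
    have hexp : ((k : ℝ) - 1) / 2 - j < 0 := by
      have : (k : ℝ) + 1 ≤ 2 * j + 1 := by exact_mod_cast mem_range.mp hk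
      linarith
    simpa using (tendsto_rpow_neg_atTop (neg_pos.mpr hexp)).const_mul _
  · have : (descPochhammer ℝ j).eval (j : ℝ) = j.factorial := by
      rw [descPochhammer_eval_eq_descFactorial, Nat.descFactorial_self]
    simp [this]

theorem integral_iteratedDerivWithin_h (j : ℕ) {c : ℝ} (hc : 0 < c) :
    ∫ s in Ioi (c ^ 2), iteratedDerivWithin (j + 1) (h (2 * j + 1) c) (Ioi 0) s = j.factorial := by
  have hderiv (x : ℝ) (hx : 0 < x) := (contDiffOn_h (2 * j + 1) c).hasDerivAt_iteratedDerivWithin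
    (WithTop.coe_lt_top (j : ℕ∞)) isOpen_Ioi (Set.mem_Ioi.mpr hx)
  rw [integral_Ioi_of_hasDerivAt_of_tendsto
      (hderiv _ (by positivity)).continuousAt.continuousWithinAt
      (fun x (hx : c ^ 2 < x) => hderiv x ((sq_nonneg c).trans_lt hx))
      (integrableOn_iteratedDerivWithin_h j.lt_succ_self c (by positivity))
      (tendsto_iteratedDerivWithin_h j c),
    iteratedDerivWithin_h_sq_eq_zero (by omega) hc, sub_zero]

end CowlingHaagerup

/-- For an integer `a ≥ 1`, put `p = 2a` and `h s = (√s − 2)^(p−1) · s^(−1/2)` for `s > 0`.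
Then the `a`-th derivative `h^(a)` is (absolutely) integrable on `(4, ∞)` with
`∫₄^∞ h^(a)(s) ds = (a − 1)! (= Γ(a))`; equivalently `h^(a−1)(s) → (a − 1)!` as `s → ∞`. -/
theorem integral_of_h_deriv (a : ℕ) (ha : 1 ≤ a) :
    IntegrableOn
      (iteratedDerivWithin a
        (fun s : ℝ => (Real.sqrt s - 2) ^ (2 * a - 1) * s ^ (-(1 : ℝ) / 2)) (Ioi 0))
      (Ioi 4) ∧
    ∫ s in Ioi (4 : ℝ),
        iteratedDerivWithin a
          (fun s : ℝ => (Real.sqrt s - 2) ^ (2 * a - 1) * s ^ (-(1 : ℝ) / 2)) (Ioi 0) s =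
      (Nat.factorial (a - 1) : ℝ) ∧
    Tendsto
      (iteratedDerivWithin (a - 1)
        (fun s : ℝ => (Real.sqrt s - 2) ^ (2 * a - 1) * s ^ (-(1 : ℝ) / 2)) (Ioi 0))
      atTop (nhds (Nat.factorial (a - 1) : ℝ)) := by
  obtain ⟨j, rfl⟩ := Nat.exists_eq_add_of_le' ha
  have hh : (fun s : ℝ => (Real.sqrt s - 2) ^ (2 * (j + 1) - 1) * s ^ (-(1 : ℝ) / 2))
      = CowlingHaagerup.h (2 * j + 1) 2 := by
    rw [show 2 * (j + 1) - 1 = 2 * j + 1 by omega]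
    rfl
  rw [hh, Nat.add_sub_cancel, show (4 : ℝ) = 2 ^ 2 by norm_num]
  exact ⟨CowlingHaagerup.integrableOn_iteratedDerivWithin_h j.lt_succ_self 2 (by positivity),
    CowlingHaagerup.integral_iteratedDerivWithin_h j two_pos,
    CowlingHaagerup.tendsto_iteratedDerivWithin_h j 2⟩
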